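/- arXiv:1303.3543 — 5 statements merged into one kernel-verified Lean document; each statement's English description precedes it below -/
import Mathlib

section
/- Suppose {μ_y : y ∈ Y} is a σ-finite disintegration of the σ-finite measure μ with respect to (ν, φ). Then there exists a sequence (D_n) of Borel subsets of X such that (1) for every n and every y ∈ Y, μ_y(D_n) < ∞, and (2) for ν-almost every y ∈ Y, μ_y(X \ ⋃_n D_n) = 0. -/
open MeasureTheory ENNReal

/-!
Cover `X` by sets `S n` of finite `μ`-measure. Since `μ (S n) = ∫⁻ y, μy y (S n) ∂ν`, for
`ν`-a.e. `y` every `μy y (S n)` is finite. Cut `S n` into the pieces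
`S n ∩ φ ⁻¹' {y | μy y (S n) ≤ m}`: each has finite `μy y`-measure for *every* `y`, because
`μy y` lives on the fibre over `y`, which meets the piece only when `μy y (S n) ≤ m`. For a.e. `y`
the pieces cover that fibre, hence carry all of `μy y`.
-/

namespace MeasureTheory

variable {X Y : Type*} [MeasurableSpace X]

def fiberwiseBoundedPart (φ : X → Y) (κ : Y → Measure X) (S : Set X) (m : ℕ) : Set X :=
  S ∩ φ ⁻¹' {y | κ y S ≤ m}

variable {φ : X → Y} {κ : Y → Measure X}

theorem measurableSet_fiberwiseBoundedPart [MeasurableSpace Y] (hφ : Measurable φ) {S : Set X}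
    (hS : MeasurableSet S) (hκS : Measurable fun y => κ y S) (m : ℕ) :
    MeasurableSet (fiberwiseBoundedPart φ κ S m) :=
  hS.inter (hφ (measurableSet_le hκS measurable_const))

theorem measure_fiberwiseBoundedPart_lt_top (hconc : ∀ y, κ y (φ ⁻¹' {y})ᶜ = 0) (S : Set X)
    (m : ℕ) (y : Y) : κ y (fiberwiseBoundedPart φ κ S m) < ∞ := by
  by_cases hy : κ y S ≤ m
  · exact (measure_mono Set.inter_subset_left).trans_lt (hy.trans_lt (natCast_lt_top m))
  · have hdisj : fiberwiseBoundedPart φ κ S m ⊆ (φ ⁻¹' {y})ᶜ := by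
      rintro x ⟨-, hx⟩ rfl
      exact hy hx
    rw [measure_mono_null hdisj (hconc y)]
    exact zero_lt_top

theorem fiber_subset_iUnion_fiberwiseBoundedPart {S : ℕ → Set X} (hcover : ⋃ n, S n = Set.univ)
    {y : Y} (hy : ∀ n, κ y (S n) < ∞) :
    φ ⁻¹' {y} ⊆ ⋃ n, ⋃ m, fiberwiseBoundedPart φ κ (S n) m := by
  rintro x rfl
  obtain ⟨n, hn⟩ := Set.mem_iUnion.mp (hcover.symm ▸ Set.mem_univ x)
  obtain ⟨m, hm⟩ := ENNReal.exists_nat_gt (hy n).ne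
  exact Set.mem_iUnion₂.mpr ⟨n, m, hn, hm.le⟩

theorem exists_uniformly_finite_cover_ae [MeasurableSpace Y] (hφ : Measurable φ)
    (hconc : ∀ y, κ y (φ ⁻¹' {y})ᶜ = 0) {ν : Measure Y} {S : ℕ → Set X}
    (hS : ∀ n, MeasurableSet (S n)) (hκS : ∀ n, Measurable fun y => κ y (S n))
    (hcover : ⋃ n, S n = Set.univ) (hfin : ∀ n, ∀ᵐ y ∂ν, κ y (S n) < ∞) :
    ∃ D : ℕ → Set X, (∀ n, MeasurableSet (D n)) ∧ (∀ n y, κ y (D n) < ∞) ∧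
      ∀ᵐ y ∂ν, κ y (⋃ n, D n)ᶜ = 0 := by
  refine ⟨fun k => fiberwiseBoundedPart φ κ (S k.unpair.1) k.unpair.2,
    fun k => measurableSet_fiberwiseBoundedPart hφ (hS _) (hκS _) _,
    fun k => measure_fiberwiseBoundedPart_lt_top hconc _ _, ?_⟩
  filter_upwards [ae_all_iff.mpr hfin] with y hy
  rw [Set.iUnion_unpair (fun n m => fiberwiseBoundedPart φ κ (S n) m)]
  exact measure_mono_null
    (Set.compl_subset_compl.mpr (fiber_subset_iUnion_fiberwiseBoundedPart hcover hy)) (hconc y)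

end MeasureTheory

theorem almost_uniformly_sigmaFinite_general
    {X Y : Type*} [MeasurableSpace X] [MeasurableSpace Y]
    (φ : X → Y) (hφ : Measurable φ)
    (μ : Measure X) (ν : Measure Y) [SigmaFinite μ]
    (μy : Y → Measure X)
    (hmeas : ∀ B : Set X, MeasurableSet B → Measurable fun y => μy y B)
    (hconc : ∀ y : Y, μy y ((φ ⁻¹' {y})ᶜ) = 0)
    (hint : ∀ B : Set X, MeasurableSet B → μ B = ∫⁻ y, μy y B ∂ν) :
    ∃ D : ℕ → Set X, (∀ n, MeasurableSet (D n)) ∧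
      (∀ n, ∀ y : Y, μy y (D n) < ⊤) ∧
      (∀ᵐ y ∂ν, μy y ((⋃ n, D n)ᶜ) = 0) := by
  have hS := measurableSet_spanningSets μ
  refine exists_uniformly_finite_cover_ae hφ hconc hS (fun n => hmeas _ (hS n))
    (iUnion_spanningSets μ) fun n => ae_lt_top (hmeas _ (hS n)) ?_
  rw [← hint _ (hS n)]
  exact (measure_spanningSets_lt_top μ n).ne

/-- If `{μy y}` is a σ-finite disintegration of the σ-finite measure `μ` with respect to
`(ν, φ)`, then there is a sequence `(D n)` of Borel sets such that `μy y (D n) < ∞` for all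
`n` and all `y`, and `μy y ((⋃ n, D n)ᶜ) = 0` for `ν`-almost every `y`. -/
theorem almost_uniformly_sigmaFinite
    {X Y : Type*} [MeasurableSpace X] [MeasurableSpace Y]
    [StandardBorelSpace X] [StandardBorelSpace Y]
    (φ : X → Y) (hφ : Measurable φ)
    (μ : Measure X) (ν : Measure Y) [SigmaFinite μ] [SigmaFinite ν]
    (μy : Y → Measure X)
    (hmeas : ∀ B : Set X, MeasurableSet B → Measurable fun y => μy y B)
    (hconc : ∀ y : Y, μy y ((φ ⁻¹' {y})ᶜ) = 0)
    (hint : ∀ B : Set X, MeasurableSet B → μ B = ∫⁻ y, μy y B ∂ν)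
    (hsf : ∀ y : Y, SigmaFinite (μy y)) :
    ∃ D : ℕ → Set X, (∀ n, MeasurableSet (D n)) ∧
      (∀ n, ∀ y : Y, μy y (D n) < ⊤) ∧
      (∀ᵐ y ∂ν, μy y ((⋃ n, D n)ᶜ) = 0) :=
  almost_uniformly_sigmaFinite_general φ hφ μ ν μy hmeas hconc hint
end

section
/- Suppose {μ_y : y ∈ Y} is a σ-finite disintegration of the σ-finite measure μ with respect to (ν, φ). Then there exists a uniformly σ-finite disintegration {μ̂_y : y ∈ Y} of μ with respect to (ν, φ) such that μ_y = μ̂_y for ν-almost every y ∈ Y. -/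
open MeasureTheory Set Filter
open scoped ENNReal

/-! Integrating `y ↦ μy y (spanningSets μ n)` against `ν` gives the finite number
`μ (spanningSets μ n)`, so for `ν`-almost every `y` all spanning sets of `μ` have finite
`μy y`-measure. Replacing `μy y` by `0` on the remaining `ν`-null set of fibres yields a
disintegration for which the spanning sets of `μ` witness uniform σ-finiteness. -/

namespace MeasureTheory

variable {X Y : Type*} [MeasurableSpace X]

theorem sigmaFinite_of_forall_lt_top_of_iUnion_eq_univ {m : Measure X} {A : ℕ → Set X}
    (hfin : ∀ n, m (A n) < ∞) (hA : ⋃ n, A n = univ) : SigmaFinite m :=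
  ⟨⟨⟨A, fun _ ↦ trivial, hfin, hA⟩⟩⟩

theorem indicator_measure_apply (s : Set Y) (κ : Y → Measure X) (y : Y) (B : Set X) :
    s.indicator κ y B = s.indicator (fun y ↦ κ y B) y := by
  by_cases hy : y ∈ s <;> simp [hy]

variable [MeasurableSpace Y]

theorem measurable_indicator_measure_apply {s : Set Y} (hs : MeasurableSet s)
    {κ : Y → Measure X} {B : Set X} (hκ : Measurable fun y ↦ κ y B) :
    Measurable fun y ↦ s.indicator κ y B := by
  simpa only [indicator_measure_apply] using hκ.indicator hs

theorem indicator_measure_ae_eq {ν : Measure Y} {s : Set Y} (hs : s ∈ ae ν)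
    (κ : Y → Measure X) : s.indicator κ =ᵐ[ν] κ := by
  filter_upwards [hs] with y hy
  exact indicator_of_mem hy κ

theorem ae_forall_measure_spanningSets_lt_top {μ : Measure X} [SigmaFinite μ]
    {ν : Measure Y} {κ : Y → Measure X}
    (hκ : ∀ B, MeasurableSet B → Measurable fun y ↦ κ y B)
    (hint : ∀ B, MeasurableSet B → μ B = ∫⁻ y, κ y B ∂ν) :
    ∀ᵐ y ∂ν, ∀ n, κ y (spanningSets μ n) < ∞ :=
  ae_all_iff.2 fun n ↦ ae_lt_top (hκ _ (measurableSet_spanningSets μ n))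
    (hint _ (measurableSet_spanningSets μ n) ▸ (measure_spanningSets_lt_top μ n).ne)

end MeasureTheory

theorem exists_uniformly_sigmaFinite_disintegration_ae_eq_general
    {X Y : Type*} [MeasurableSpace X] [MeasurableSpace Y]
    (φ : X → Y)
    (μ : Measure X) (ν : Measure Y) [SigmaFinite μ]
    (μy : Y → Measure X)
    (hmeas : ∀ B : Set X, MeasurableSet B → Measurable fun y => μy y B)
    (hconc : ∀ y : Y, μy y ((φ ⁻¹' {y})ᶜ) = 0)
    (hint : ∀ B : Set X, MeasurableSet B → μ B = ∫⁻ y, μy y B ∂ν) :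
    ∃ μhat : Y → Measure X,
      (∀ B : Set X, MeasurableSet B → Measurable fun y => μhat y B) ∧
      (∀ y : Y, μhat y ((φ ⁻¹' {y})ᶜ) = 0) ∧
      (∀ B : Set X, MeasurableSet B → μ B = ∫⁻ y, μhat y B ∂ν) ∧
      (∀ y : Y, SigmaFinite (μhat y)) ∧
      (∃ B : ℕ → Set X, (∀ n, MeasurableSet (B n)) ∧
        (∀ n, ∀ y : Y, μhat y (B n) < ⊤) ∧
        (∀ y : Y, μhat y ((⋃ n, B n)ᶜ) = 0)) ∧
      (∀ᵐ y ∂ν, μhat y = μy y) := by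
  obtain ⟨G, hG, hGmeas, hGfin⟩ :=
    (ae_forall_measure_spanningSets_lt_top hmeas hint).exists_measurable_mem
  have hfin : ∀ n y, G.indicator μy y (spanningSets μ n) < ∞ := fun n y ↦ by
    by_cases hy : y ∈ G
    · simpa [hy] using hGfin y hy n
    · simp [hy]
  have hae := indicator_measure_ae_eq hG μy
  refine ⟨G.indicator μy, fun B hB ↦ measurable_indicator_measure_apply hGmeas (hmeas B hB),
    fun y ↦ by simp [indicator_measure_apply, hconc y],
    fun B hB ↦ (hint B hB).trans (lintegral_congr_ae (hae.mono fun y hy ↦ by rw [hy])).symm,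
    fun y ↦ sigmaFinite_of_forall_lt_top_of_iUnion_eq_univ (hfin · y) (iUnion_spanningSets μ),
    ⟨spanningSets μ, measurableSet_spanningSets μ, hfin, by simp [iUnion_spanningSets]⟩, hae⟩

/-- If `{μy y}` is a σ-finite disintegration of the σ-finite measure `μ` with respect to
`(ν, φ)`, then there is a uniformly σ-finite disintegration `{μ̂ y}` of `μ` with respect to
`(ν, φ)` which agrees with `{μy y}` for `ν`-almost every `y`. -/
theorem exists_uniformly_sigmaFinite_disintegration_ae_eq
    {X Y : Type*} [MeasurableSpace X] [MeasurableSpace Y]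
    [StandardBorelSpace X] [StandardBorelSpace Y]
    (φ : X → Y) (hφ : Measurable φ)
    (μ : Measure X) (ν : Measure Y) [SigmaFinite μ] [SigmaFinite ν]
    (μy : Y → Measure X)
    (hmeas : ∀ B : Set X, MeasurableSet B → Measurable fun y => μy y B)
    (hconc : ∀ y : Y, μy y ((φ ⁻¹' {y})ᶜ) = 0)
    (hint : ∀ B : Set X, MeasurableSet B → μ B = ∫⁻ y, μy y B ∂ν)
    (hsf : ∀ y : Y, SigmaFinite (μy y)) :
    ∃ μhat : Y → Measure X,
      (∀ B : Set X, MeasurableSet B → Measurable fun y => μhat y B) ∧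
      (∀ y : Y, μhat y ((φ ⁻¹' {y})ᶜ) = 0) ∧
      (∀ B : Set X, MeasurableSet B → μ B = ∫⁻ y, μhat y B ∂ν) ∧
      (∀ y : Y, SigmaFinite (μhat y)) ∧
      (∃ B : ℕ → Set X, (∀ n, MeasurableSet (B n)) ∧
        (∀ n, ∀ y : Y, μhat y (B n) < ⊤) ∧
        (∀ y : Y, μhat y ((⋃ n, B n)ᶜ) = 0)) ∧
      (∀ᵐ y ∂ν, μhat y = μy y) :=
  exists_uniformly_sigmaFinite_disintegration_ae_eq_general φ μ ν μy hmeas hconc hint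
end

section
/- Let X and Y be Polish spaces, φ : X → Y Borel measurable, and {μ_y : y ∈ Y} a family of purely atomic measures with μ_y concentrated on φ⁻¹(y), such that for every Borel B ⊆ X the map y ↦ μ_y(B) is Borel measurable. If the set W = {(y,x) ∈ Y × X : μ_y({x}) > 0} is the union of countably many graphs of Borel functions f_n : Y → X, then each f_n is injective (when the fibers φ⁻¹(y) for distinct y are disjoint, sections W_y are disjoint), the images E_n = f_n(Y) are Borel, μ_y(E_n) < ∞ for every y and n, and μ_y(X \ ⋃_n E_n) = 0 for every y; i.e., the family is uniformly σ-finite. -/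
open MeasureTheory

/-- If the atom set `W = {(y,x) : μy y {x} > 0}` of a purely atomic family of measures
(with `μy y` concentrated on the fiber `φ ⁻¹' {y}`) is the union of countably many graphs
of Borel functions `f n : Y → X`, then each `f n` is injective, each image
`E n = Set.range (f n)` is Borel, `μy y (E n) < ∞` for all `y, n`, and
`μy y ((⋃ n, E n)ᶜ) = 0` for all `y`; i.e. the family is uniformly σ-finite. -/
theorem uniformly_sigmaFinite_of_atoms_union_of_graphs
    {X Y : Type*} [MeasurableSpace X] [MeasurableSpace Y]
    [StandardBorelSpace X] [StandardBorelSpace Y]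
    (φ : X → Y) (hφ : Measurable φ)
    (μy : Y → Measure X)
    (hmeas : ∀ B : Set X, MeasurableSet B → Measurable fun y => μy y B)
    (hconc : ∀ y : Y, μy y ((φ ⁻¹' {y})ᶜ) = 0)
    (hatomset : ∀ y : Y, ({x : X | 0 < μy y {x}}).Countable)
    (hatomic : ∀ y : Y, μy y ({x : X | 0 < μy y {x}}ᶜ) = 0)
    (hfinatom : ∀ y : Y, ∀ x : X, μy y {x} < ⊤)
    (f : ℕ → Y → X) (hf : ∀ n, Measurable (f n))
    (hW : {p : Y × X | 0 < μy p.1 {p.2}} = ⋃ n, {p : Y × X | p.2 = f n p.1}) :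
    (∀ n, Function.Injective (f n)) ∧
    (∀ n, MeasurableSet (Set.range (f n))) ∧
    (∀ n, ∀ y : Y, μy y (Set.range (f n)) < ⊤) ∧
    (∀ y : Y, μy y ((⋃ n, Set.range (f n))ᶜ) = 0) := by
  have key : ∀ n y, 0 < μy y {f n y} := by
    intro n y
    have : (y, f n y) ∈ ⋃ n, {p : Y × X | p.2 = f n p.1} :=
      Set.mem_iUnion.2 ⟨n, rfl⟩
    rw [← hW] at this
    exact this
  have hφf : ∀ n y, φ (f n y) = y := by
    intro n y
    by_contra h
    have h0 : μy y {f n y} = 0 := by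
      refine measure_mono_null ?_ (hconc y)
      intro x hx
      simp only [Set.mem_singleton_iff] at hx
      subst hx
      simpa using h
    exact absurd h0 (key n y).ne'
  have hinj : ∀ n, Function.Injective (f n) := by
    intro n a b hab
    rw [← hφf n a, hab, hφf]
  refine ⟨hinj, fun n => ((hf n).measurableEmbedding (hinj n)).measurableSet_range, ?_, ?_⟩
  · intro n y
    have hsub : Set.range (f n) ⊆ {f n y} ∪ (φ ⁻¹' {y})ᶜ := by
      rintro x ⟨y', rfl⟩
      by_cases h : φ (f n y') = y
      · left
        rw [hφf n y'] at h
        subst h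
        rfl
      · right
        exact h
    calc μy y (Set.range (f n)) ≤ μy y ({f n y} ∪ (φ ⁻¹' {y})ᶜ) := measure_mono hsub
      _ ≤ μy y {f n y} + μy y ((φ ⁻¹' {y})ᶜ) := measure_union_le _ _
      _ = μy y {f n y} := by rw [hconc y, add_zero]
      _ < ⊤ := hfinatom y _
  · intro y
    refine measure_mono_null ?_ (hatomic y)
    intro x hx
    simp only [Set.mem_compl_iff, Set.mem_iUnion] at hx ⊢
    intro hpos
    have : (y, x) ∈ ⋃ n, {p : Y × X | p.2 = f n p.1} := by rw [← hW]; exact hpos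
    obtain ⟨n, hn⟩ := Set.mem_iUnion.1 this
    exact hx ⟨n, y, hn.symm⟩
end

section
/- If y ↦ μ_y is a measure kernel on a Polish space X indexed by a Polish space Y with μ_y(X) < ∞ for all y, then the map F : Y × K(X) → ℝ given by F(y, K) = μ_y(K) is Borel measurable, where K(X) is the space of compact subsets of X with the Vietoris topology. -/
open MeasureTheory TopologicalSpace Metric Set

/-- For an open set `U`, the set of nonempty compact sets contained in `U` is open in the
Hausdorff metric topology. -/
lemma isOpen_nonemptyCompacts_subset {X : Type*} [MetricSpace X] {U : Set X} (hU : IsOpen U) :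
    IsOpen {K : NonemptyCompacts X | (K : Set X) ⊆ U} := by
  rw [EMetric.isOpen_iff]
  intro K hK
  obtain ⟨δ, hδ, hsub⟩ := K.isCompact.exists_thickening_subset_open hU hK
  refine ⟨ENNReal.ofReal δ, by simpa using hδ, fun L hL => ?_⟩
  intro x hx
  have hd : EMetric.hausdorffEdist (L : Set X) (K : Set X) < ENNReal.ofReal δ := hL
  obtain ⟨y, hy, hxy⟩ := EMetric.exists_edist_lt_of_hausdorffEdist_lt hx hd
  exact hsub ((Metric.mem_thickening_iff_exists_edist_lt _ _).2 ⟨y, hy, hxy⟩)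

/-- If `y ↦ μy y` is a measure kernel on a Polish space `X` indexed by a Polish space
`Y`, with `μy y X < ∞` for all `y`, then `F (y, K) = μy y K` is a Borel measurable map
from `Y × K(X)` to `ℝ`, where `K(X)` is the hyperspace of (nonempty) compact subsets of
`X` with the Vietoris (Hausdorff metric) topology. -/
theorem measurable_kernel_on_compacts
    {X Y : Type*} [MetricSpace X] [PolishSpace X]
    [MeasurableSpace X] [BorelSpace X]
    [MeasurableSpace Y] [StandardBorelSpace Y]
    [MeasurableSpace (NonemptyCompacts X)] [BorelSpace (NonemptyCompacts X)]
    (μy : Y → Measure X)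
    (hmeas : ∀ B : Set X, MeasurableSet B → Measurable fun y => μy y B)
    (hfin : ∀ y, μy y Set.univ < ⊤) :
    Measurable fun p : Y × NonemptyCompacts X => (μy p.1 (p.2 : Set X)).toReal := by
  -- enumeration of a countable basis (plus ∅)
  obtain ⟨b, hbc, -, hb⟩ := exists_countable_basis X
  obtain ⟨V, hV⟩ := (hbc.insert ∅).exists_eq_range (insert_nonempty _ _)
  have hVopen : ∀ i, IsOpen (V i) := by
    intro i
    have : V i ∈ insert ∅ b := hV ▸ mem_range_self i
    rcases this with h | h
    · simp [h]
    · exact hb.isOpen h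
  have key : Measurable fun p : Y × NonemptyCompacts X => μy p.1 (p.2 : Set X) := by
    apply measurable_of_Iio
    intro c
    have : (fun p : Y × NonemptyCompacts X => μy p.1 (p.2 : Set X)) ⁻¹' Iio c =
        ⋃ t : Finset ℕ, {y | μy y (⋃ i ∈ t, V i) < c} ×ˢ
          {K : NonemptyCompacts X | (K : Set X) ⊆ ⋃ i ∈ t, V i} := by
      ext ⟨y, K⟩
      simp only [mem_preimage, mem_Iio, mem_iUnion, mem_prod, Set.mem_setOf_eq]
      constructor
      · intro h
        haveI : IsFiniteMeasure (μy y) := ⟨hfin y⟩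
        obtain ⟨U, hKU, hUopen, hUc⟩ := Set.exists_isOpen_lt_of_lt (K : Set X) c h
        -- cover K by basis elements contained in U
        have hcover : (K : Set X) ⊆ ⋃ i : {i // V i ⊆ U}, V i := by
          intro x hx
          obtain ⟨W, hWb, hxW, hWU⟩ := hb.exists_subset_of_mem_open (hKU hx) hUopen
          have : W ∈ range V := by rw [← hV]; exact mem_insert_of_mem _ hWb
          obtain ⟨i, rfl⟩ := this
          exact mem_iUnion.2 ⟨⟨i, hWU⟩, hxW⟩
        obtain ⟨t, ht⟩ := K.isCompact.elim_finite_subcover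
          (fun i : {i // V i ⊆ U} => V i) (fun i => hVopen i) hcover
        refine ⟨t.image Subtype.val, ?_, ?_⟩
        · refine lt_of_le_of_lt (measure_mono ?_) hUc
          intro x hx
          simp only [mem_iUnion, Finset.mem_image] at hx
          obtain ⟨i, ⟨j, hj, rfl⟩, hxi⟩ := hx
          exact j.2 hxi
        · intro x hx
          obtain ⟨i, hi, hxi⟩ := mem_iUnion₂.1 (ht hx)
          exact mem_iUnion₂.2 ⟨i.1, Finset.mem_image_of_mem _ hi, hxi⟩
      · rintro ⟨t, htc, hKt⟩
        exact lt_of_le_of_lt (measure_mono hKt) htc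
    rw [this]
    refine MeasurableSet.iUnion fun t => MeasurableSet.prod ?_ ?_
    · exact measurableSet_lt (hmeas _ (IsOpen.measurableSet (isOpen_biUnion fun i _ => hVopen i)))
        measurable_const
    · exact (isOpen_nonemptyCompacts_subset (isOpen_biUnion fun i _ => hVopen i)).measurableSet
  exact key.ennreal_toReal
end

section
/- Let {μ_y : y ∈ Y} be a σ-finite disintegration of μ with respect to (ν, φ) that is uniformly σ-finite. Then the map (y, K) ↦ μ_y(K) from Y × K(X) to [0, ∞] is Borel measurable. -/
open MeasureTheory TopologicalSpace Metric Set Filter Topology ProbabilityTheory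

/-!
For a kernel of finite measures, `(y, K) ↦ κ y (thickening δ K)` is measurable, because
`{(x, K) | x ∈ thickening δ K}` is open in `X × K(X)`. Letting `δ ↓ 0` gives `κ y K` for compact
`K`. In general one restricts `μ_y` to the finite-measure sets `B₀ ∪ ⋯ ∪ Bₙ` and takes the
supremum over `n`.
-/

section

variable {X Y : Type*} [MetricSpace X]

lemma isOpen_setOf_mem_thickening (δ : ℝ) :
    IsOpen {r : X × NonemptyCompacts X | r.1 ∈ thickening δ (r.2 : Set X)} := by
  simp_rw [mem_thickening_iff_infDist_lt (NonemptyCompacts.nonempty _)]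
  exact isOpen_lt lipschitz_infDist.continuous continuous_const

variable [MeasurableSpace X] [MeasurableSpace Y]

lemma tendsto_measure_thickening_one_div_of_isClosed [OpensMeasurableSpace X] (m : Measure X)
    [IsFiniteMeasure m] {s : Set X} (hs : IsClosed s) :
    Tendsto (fun j : ℕ => m (thickening (1 / ((j : ℝ) + 1)) s)) atTop (𝓝 (m s)) := by
  have h_pos : Tendsto (fun j : ℕ => 1 / ((j : ℝ) + 1)) atTop (𝓝[>] 0) :=
    tendsto_nhdsWithin_iff.2 ⟨tendsto_one_div_add_atTop_nhds_zero_nat,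
      Eventually.of_forall fun j => mem_Ioi.2 (by positivity)⟩
  exact (tendsto_measure_thickening_of_isClosed ⟨1, one_pos, measure_ne_top _ _⟩ hs).comp h_pos

namespace ProbabilityTheory.Kernel

variable [SecondCountableTopology X] [BorelSpace X]
  [MeasurableSpace (NonemptyCompacts X)] [BorelSpace (NonemptyCompacts X)]

lemma measurable_apply_thickening_of_isFiniteMeasure (κ : Kernel Y X)
    (hκ : ∀ y, IsFiniteMeasure (κ y)) (δ : ℝ) :
    Measurable fun p : Y × NonemptyCompacts X => κ p.1 (thickening δ (p.2 : Set X)) := by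
  have h_set : MeasurableSet ((fun q : (Y × NonemptyCompacts X) × X => (q.2, q.1.2)) ⁻¹'
      {r : X × NonemptyCompacts X | r.1 ∈ thickening δ (r.2 : Set X)}) :=
    (isOpen_setOf_mem_thickening δ).measurableSet.preimage
      (measurable_snd.prodMk (measurable_snd.comp measurable_fst))
  exact measurable_kernel_prodMk_left_of_finite (κ := κ.comap Prod.fst measurable_fst)
    h_set fun p => hκ p.1

lemma measurable_apply_nonemptyCompacts_of_isFiniteMeasure (κ : Kernel Y X)
    (hκ : ∀ y, IsFiniteMeasure (κ y)) :
    Measurable fun p : Y × NonemptyCompacts X => κ p.1 (p.2 : Set X) :=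
  measurable_of_tendsto_metrizable
    (fun j => κ.measurable_apply_thickening_of_isFiniteMeasure hκ (1 / ((j : ℝ) + 1)))
    (tendsto_pi_nhds.2 fun p =>
      tendsto_measure_thickening_one_div_of_isClosed (κ p.1) p.2.isCompact.isClosed)

lemma measurable_apply_nonemptyCompacts (κ : Kernel Y X) {B : ℕ → Set X}
    (hB : ∀ n, MeasurableSet (B n)) (hBfin : ∀ n y, κ y (B n) < ⊤)
    (hBcover : ∀ y, κ y (⋃ n, B n)ᶜ = 0) :
    Measurable fun p : Y × NonemptyCompacts X => κ p.1 (p.2 : Set X) := by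
  have hA : ∀ n, MeasurableSet (accumulate B n) := fun n =>
    .biUnion (to_countable _) fun k _ => hB k
  have h_fin : ∀ n y, IsFiniteMeasure ((κ.restrict (hA n)) y) := fun n y =>
    ⟨by
      rw [restrict_apply, Measure.restrict_apply_univ]
      exact measure_biUnion_lt_top (finite_Iic n) fun k _ => hBfin k y⟩
  have h_sup : ∀ (y : Y) (K : Set X), κ y K = ⨆ n, κ y (K ∩ accumulate B n) := by
    intro y K
    rw [← Monotone.measure_iUnion fun i j hij => inter_subset_inter_right K
        (monotone_accumulate hij), ← inter_iUnion, iUnion_accumulate,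
      measure_inter_conull (hBcover y)]
  have h_restrict : ∀ n y (K : NonemptyCompacts X),
      κ y (K ∩ accumulate B n) = (κ.restrict (hA n)) y K := fun n y K =>
    (restrict_apply' κ (hA n) y K.isCompact.isClosed.measurableSet).symm
  have h_eq : (fun p : Y × NonemptyCompacts X => κ p.1 (p.2 : Set X)) =
      fun p => ⨆ n, (κ.restrict (hA n)) p.1 p.2 := by
    funext p
    simp only [h_sup p.1 p.2, h_restrict]
  rw [h_eq]
  exact .iSup fun n => (κ.restrict (hA n)).measurable_apply_nonemptyCompacts_of_isFiniteMeasure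
    (h_fin n)

end ProbabilityTheory.Kernel

end

theorem measurable_of_uniformly_sigmaFinite_general
    {X Y : Type*} [MetricSpace X] [PolishSpace X]
    [MeasurableSpace X] [BorelSpace X]
    [MeasurableSpace Y]
    [MeasurableSpace (NonemptyCompacts X)] [BorelSpace (NonemptyCompacts X)]
    (μy : Y → Measure X)
    (hmeas : ∀ B : Set X, MeasurableSet B → Measurable fun y => μy y B)
    (B : ℕ → Set X) (hB : ∀ n, MeasurableSet (B n))
    (hBfin : ∀ n, ∀ y : Y, μy y (B n) < ⊤)
    (hBcover : ∀ y : Y, μy y ((⋃ n, B n)ᶜ) = 0) :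
    Measurable fun p : Y × NonemptyCompacts X => μy p.1 (p.2 : Set X) :=
  let κ : Kernel Y X := ⟨μy, Measure.measurable_of_measurable_coe _ hmeas⟩
  κ.measurable_apply_nonemptyCompacts hB hBfin hBcover

/-- If `{μy y}` is a uniformly σ-finite disintegration of `μ` with respect to `(ν, φ)`,
then the map `(y, K) ↦ μy y K` from `Y × K(X)` to `[0, ∞]` is Borel measurable, where
`K(X)` is the hyperspace of (nonempty) compact subsets of `X` with the Vietoris
(Hausdorff metric) topology. -/
theorem measurable_of_uniformly_sigmaFinite
    {X Y : Type*} [MetricSpace X] [PolishSpace X]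
    [MeasurableSpace X] [BorelSpace X]
    [MeasurableSpace Y] [StandardBorelSpace Y]
    [MeasurableSpace (NonemptyCompacts X)] [BorelSpace (NonemptyCompacts X)]
    (φ : X → Y) (hφ : Measurable φ)
    (μ : Measure X) (ν : Measure Y) (μy : Y → Measure X)
    (hmeas : ∀ B : Set X, MeasurableSet B → Measurable fun y => μy y B)
    (hconc : ∀ y : Y, μy y ((φ ⁻¹' {y})ᶜ) = 0)
    (hint : ∀ B : Set X, MeasurableSet B → μ B = ∫⁻ y, μy y B ∂ν)
    (hsf : ∀ y : Y, SigmaFinite (μy y))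
    (B : ℕ → Set X) (hB : ∀ n, MeasurableSet (B n))
    (hBfin : ∀ n, ∀ y : Y, μy y (B n) < ⊤)
    (hBcover : ∀ y : Y, μy y ((⋃ n, B n)ᶜ) = 0) :
    Measurable fun p : Y × NonemptyCompacts X => μy p.1 (p.2 : Set X) :=
  measurable_of_uniformly_sigmaFinite_general μy hmeas B hB hBfin hBcover
end
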